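/- arXiv:0806.3803 — 2 statements merged into one kernel-verified Lean document; each statement's English description precedes it below -/
import Mathlib

section
/- Let U ⊆ ℂ be an open set and let f, ζ, h : ℂ → ℂ be functions such that f and ζ are real-differentiable at every point of U, and such that for all z ∈ U the Wirtinger equations ∂ζ/∂z̄(z) = h(z) and ∂f/∂z̄(z) + h(z)·f(z) = 0 hold. Then the function z ↦ f(z)·exp(ζ(z)) is holomorphic on U (i.e., complex-differentiable at every point of U). -/
/-- The Wirtinger derivative ∂g/∂z̄ of `g : ℂ → ℂ` at `z`, defined via the real
Fréchet derivative as `(1/2)(Dg(z)(1) + i·Dg(z)(i))`. -/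
noncomputable def wirtingerBar (g : ℂ → ℂ) (z : ℂ) : ℂ :=
  (1 / 2 : ℂ) * (fderiv ℝ g z 1 + Complex.I * fderiv ℝ g z Complex.I)

/-! The operator `∂/∂z̄` obeys the Leibniz rule and the chain rule `∂̄(φ ∘ ζ) = φ'(ζ) · ∂̄ζ`
for holomorphic `φ`, so `∂̄(f e^ζ) = e^ζ (∂̄f + f ∂̄ζ) = e^ζ (∂̄f + h f) = 0` on `U`. A
real-differentiable function with vanishing `∂̄` satisfies the Cauchy–Riemann equations, hence
is complex-differentiable. -/

open Complex

theorem wirtingerBar_eq_zero_iff {g : ℂ → ℂ} {z : ℂ} :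
    wirtingerBar g z = 0 ↔ fderiv ℝ g z I = I • fderiv ℝ g z 1 := by
  rw [wirtingerBar, smul_eq_mul]
  constructor <;> intro h
  · linear_combination (-2 * I) * h + fderiv ℝ g z I * I_sq
  · linear_combination (I / 2) * h + fderiv ℝ g z 1 / 2 * I_sq

theorem differentiableAt_complex_iff_wirtingerBar_eq_zero {g : ℂ → ℂ} {z : ℂ} :
    DifferentiableAt ℂ g z ↔ DifferentiableAt ℝ g z ∧ wirtingerBar g z = 0 := by
  rw [differentiableAt_complex_iff_differentiableAt_real, wirtingerBar_eq_zero_iff]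

theorem wirtingerBar_mul {f g : ℂ → ℂ} {z : ℂ} (hf : DifferentiableAt ℝ f z)
    (hg : DifferentiableAt ℝ g z) :
    wirtingerBar (fun w => f w * g w) z = wirtingerBar f z * g z + f z * wirtingerBar g z := by
  have hmul : HasFDerivAt (fun w => f w * g w) _ z := hf.hasFDerivAt.mul hg.hasFDerivAt
  rw [wirtingerBar, hmul.fderiv]
  simp only [wirtingerBar, add_apply, smul_apply, smul_eq_mul]
  ring

theorem wirtingerBar_comp {φ g : ℂ → ℂ} {z : ℂ} (hφ : DifferentiableAt ℂ φ (g z))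
    (hg : DifferentiableAt ℝ g z) :
    wirtingerBar (fun w => φ (g w)) z = deriv φ (g z) * wirtingerBar g z := by
  have hcomp : HasFDerivAt (fun w => φ (g w)) _ z :=
    (hφ.hasDerivAt.hasFDerivAt.restrictScalars ℝ).comp z hg.hasFDerivAt
  rw [wirtingerBar, hcomp.fderiv]
  simp only [wirtingerBar, ContinuousLinearMap.comp_apply,
    ContinuousLinearMap.coe_restrictScalars', ContinuousLinearMap.toSpanSingleton_apply, smul_eq_mul]
  ring

theorem holomorphic_of_wirtinger_eq_general (U : Set ℂ)
    (f ζ h : ℂ → ℂ)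
    (hf : ∀ z ∈ U, DifferentiableAt ℝ f z)
    (hζ : ∀ z ∈ U, DifferentiableAt ℝ ζ z)
    (hζeq : ∀ z ∈ U, wirtingerBar ζ z = h z)
    (hfeq : ∀ z ∈ U, wirtingerBar f z + h z * f z = 0) :
    ∀ z ∈ U, DifferentiableAt ℂ (fun w => f w * Complex.exp (ζ w)) z := by
  intro z hz
  have hexp : DifferentiableAt ℝ (fun w => exp (ζ w)) z := (hζ z hz).cexp
  refine differentiableAt_complex_iff_wirtingerBar_eq_zero.2 ⟨(hf z hz).mul hexp, ?_⟩
  rw [wirtingerBar_mul (hf z hz) hexp, wirtingerBar_comp differentiableAt_exp (hζ z hz),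
    Complex.deriv_exp, hζeq z hz]
  linear_combination exp (ζ z) * hfeq z hz

/-- If `f` and `ζ` are real-differentiable on an open set `U ⊆ ℂ` and satisfy
`∂ζ/∂z̄ = h` and `∂f/∂z̄ + h·f = 0` on `U`, then `z ↦ f z * exp (ζ z)` is
holomorphic on `U`. -/
theorem holomorphic_of_wirtinger_eq (U : Set ℂ) (hU : IsOpen U)
    (f ζ h : ℂ → ℂ)
    (hf : ∀ z ∈ U, DifferentiableAt ℝ f z)
    (hζ : ∀ z ∈ U, DifferentiableAt ℝ ζ z)
    (hζeq : ∀ z ∈ U, wirtingerBar ζ z = h z)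
    (hfeq : ∀ z ∈ U, wirtingerBar f z + h z * f z = 0) :
    ∀ z ∈ U, DifferentiableAt ℂ (fun w => f w * Complex.exp (ζ w)) z :=
  holomorphic_of_wirtinger_eq_general U f ζ h hf hζ hζeq hfeq
end

section
/- Let U ⊆ ℂ be open, let h : ℂ → ℂ be smooth (infinitely real-differentiable) on U, and let z₀ ∈ U. Then there exist a radius r > 0 with the open ball B(z₀, r) contained in U, and a function ζ : ℂ → ℂ that is real-differentiable at every point of B(z₀, r), such that ∂ζ/∂z̄(z) = h(z) for all z ∈ B(z₀, r). -/
open MeasureTheory Set Complex Metric Convolution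

lemma oneDim' (R : ℝ) (hR : 0 < R) :
    IntegrableOn (fun x : ℝ => |x| ^ (-(1:ℝ)/2)) (Icc (-R) R) := by
  set F : ℝ → ℝ := fun x => |x| ^ (-(1:ℝ)/2) with hF
  have A : IntervalIntegrable F volume 0 R := by
    have h := intervalIntegral.intervalIntegrable_rpow' (a := 0) (b := R)
        (r := -(1:ℝ)/2) (by norm_num)
    rw [intervalIntegrable_iff_integrableOn_Ioc_of_le hR.le] at h ⊢
    exact h.congr_fun (fun x hx => by rw [hF]; simp [abs_of_pos hx.1]) measurableSet_Ioc
  have B : IntervalIntegrable F volume (-R) 0 := by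
    have := ((IntervalIntegrable.iff_comp_neg (f := F) (a := 0) (b := R)).mp A)
    simp only [neg_zero] at this
    have h2 : (fun x => F (-x)) = F := by funext x; simp [hF]
    rw [h2] at this
    exact this.symm
  have C := B.trans A
  rw [intervalIntegrable_iff_integrableOn_Ioc_of_le (by linarith)] at C
  rw [integrableOn_Icc_iff_integrableOn_Ioc]
  exact C



lemma locInt : LocallyIntegrable (fun t : ℂ => t⁻¹) volume := by
  rw [locallyIntegrable_iff]
  intro K hK
  obtain ⟨R, hR0, hKR⟩ : ∃ R : ℝ, 0 < R ∧ K ⊆ closedBall 0 R := by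
    obtain ⟨R, hKR⟩ := hK.isBounded.subset_closedBall 0
    exact ⟨max R 1, lt_max_of_lt_right one_pos,
      hKR.trans (closedBall_subset_closedBall (le_max_left _ _))⟩
  apply IntegrableOn.mono_set ?_ hKR
  set G : ℂ → ℝ := fun z => |z.re| ^ (-(1:ℝ)/2) * |z.im| ^ (-(1:ℝ)/2) with hG
  have hGint : IntegrableOn G (closedBall 0 R) := by
    have hF : IntegrableOn (fun p : ℝ × ℝ => |p.1| ^ (-(1:ℝ)/2) * |p.2| ^ (-(1:ℝ)/2))
        (Icc (-R) R ×ˢ Icc (-R) R) := by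
      have := (oneDim' R hR0).mul_prod (oneDim' R hR0)
      rwa [Measure.prod_restrict, ← Measure.volume_eq_prod] at this
    have key := (Complex.volume_preserving_equiv_real_prod.integrableOn_comp_preimage
      Complex.measurableEquivRealProd.measurableEmbedding
      (f := fun p : ℝ × ℝ => |p.1| ^ (-(1:ℝ)/2) * |p.2| ^ (-(1:ℝ)/2))
      (s := Icc (-R) R ×ˢ Icc (-R) R)).mpr hF
    apply IntegrableOn.mono_set key
    intro z hz
    simp only [mem_preimage, Complex.measurableEquivRealProd, mem_prod, mem_Icc,
      MeasurableEquiv.coe_mk, Equiv.coe_fn_mk, Complex.equivRealProd_apply] at *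
    have h1 := abs_le.mp ((abs_re_le_norm z).trans (by simpa using mem_closedBall_zero_iff.mp hz))
    have h2 := abs_le.mp ((abs_im_le_norm z).trans (by simpa using mem_closedBall_zero_iff.mp hz))
    exact ⟨⟨h1.1, h1.2⟩, ⟨h2.1, h2.2⟩⟩
  apply Integrable.mono' hGint
  · exact (measurable_inv (G := ℂ)).aestronglyMeasurable
  · have hre : (volume : Measure ℂ) {z | z.re = 0} = 0 := by
      have h : {z : ℂ | z.re = 0} = Complex.measurableEquivRealProd ⁻¹' ({0} ×ˢ univ) := by
        ext z
        simp [Complex.measurableEquivRealProd, eq_comm]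
      rw [h, Complex.volume_preserving_equiv_real_prod.measure_preimage
        (((MeasurableSet.singleton 0).prod MeasurableSet.univ).nullMeasurableSet),
        Measure.volume_eq_prod, Measure.prod_prod]
      simp
    have him : (volume : Measure ℂ) {z | z.im = 0} = 0 := by
      have h : {z : ℂ | z.im = 0} = Complex.measurableEquivRealProd ⁻¹' (univ ×ˢ {0}) := by
        ext z
        simp [Complex.measurableEquivRealProd, eq_comm]
      rw [h, Complex.volume_preserving_equiv_real_prod.measure_preimage
        ((MeasurableSet.univ.prod (MeasurableSet.singleton 0)).nullMeasurableSet),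
        Measure.volume_eq_prod, Measure.prod_prod]
      simp
    rw [ae_restrict_iff' measurableSet_closedBall]
    filter_upwards [measure_eq_zero_iff_ae_notMem.mp hre, measure_eq_zero_iff_ae_notMem.mp him] with z h1 h2 _
    replace h1 : z.re ≠ 0 := fun hh => h1 hh
    replace h2 : z.im ≠ 0 := fun hh => h2 hh
    rw [norm_inv]
    have hb : Real.sqrt (|z.re| * |z.im|) ≤ ‖z‖ := by
      rw [Complex.norm_def, Complex.normSq_apply]
      apply Real.sqrt_le_sqrt
      nlinarith [abs_nonneg z.re, abs_nonneg z.im, _root_.sq_abs z.re, _root_.sq_abs z.im,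
        sq_nonneg (|z.re| - |z.im|)]
    have hpos : 0 < Real.sqrt (|z.re| * |z.im|) :=
      Real.sqrt_pos.mpr (mul_pos (abs_pos.mpr h1) (abs_pos.mpr h2))
    calc ‖z‖⁻¹ ≤ (Real.sqrt (|z.re| * |z.im|))⁻¹ := inv_anti₀ hpos hb
      _ = G z := by
          rw [hG, Real.sqrt_mul (abs_nonneg _), mul_inv,
            Real.sqrt_eq_rpow, Real.sqrt_eq_rpow,
            ← Real.rpow_neg (abs_nonneg _), ← Real.rpow_neg (abs_nonneg _)]
          norm_num


noncomputable def eC (θ : ℝ) : ℂ := Complex.exp (θ * Complex.I)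

lemma eC_ne (θ : ℝ) : eC θ ≠ 0 := Complex.exp_ne_zero _

lemma eC_eq (θ : ℝ) : eC θ = (Real.cos θ : ℂ) + (Real.sin θ : ℂ) * Complex.I := by
  rw [eC, Complex.exp_mul_I, Complex.ofReal_cos, Complex.ofReal_sin]

lemma eC_abs (θ : ℝ) : ‖eC θ‖ = 1 := by
  rw [eC, Complex.norm_exp]; simp

lemma rot (L : ℂ →L[ℝ] ℂ) (θ : ℝ) :
    L (eC θ) + Complex.I * L (Complex.I * eC θ)
      = (eC θ)⁻¹ * (L 1 + Complex.I * L Complex.I) := by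
  have h1 : L (eC θ) = (Real.cos θ : ℂ) * L 1 + (Real.sin θ : ℂ) * L Complex.I := by
    have h : eC θ = (Real.cos θ : ℝ) • (1 : ℂ) + (Real.sin θ : ℝ) • Complex.I := by
      rw [eC_eq]; simp [Complex.real_smul]
    rw [h, map_add, L.map_smul, L.map_smul, Complex.real_smul, Complex.real_smul]
  have h2 : L (Complex.I * eC θ) =
      -(Real.sin θ : ℂ) * L 1 + (Real.cos θ : ℂ) * L Complex.I := by
    have h : Complex.I * eC θ = (-Real.sin θ : ℝ) • (1 : ℂ) + (Real.cos θ : ℝ) • Complex.I := by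
      rw [eC_eq, Complex.real_smul, Complex.real_smul, Complex.ofReal_neg]
      linear_combination (Real.sin θ : ℂ) * Complex.I_sq
    rw [h, map_add, L.map_smul, L.map_smul, Complex.real_smul, Complex.real_smul,
      Complex.ofReal_neg]
  have hsc : ((Real.cos θ : ℂ))^2 + ((Real.sin θ : ℂ))^2 = 1 := by
    exact_mod_cast congrArg Complex.ofReal (Real.cos_sq_add_sin_sq θ)
  rw [eq_comm, inv_mul_eq_iff_eq_mul₀ (eC_ne θ), h1, h2, eC_eq]
  linear_combination (-(L 1 + Complex.I * L Complex.I)) * hsc +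
    (((Real.sin θ : ℂ))^2 * L 1 - ((Real.cos θ : ℂ) * (Real.sin θ : ℂ)) * L Complex.I) *
      Complex.I_sq




lemma setIntegral_prod_symm' (f : ℝ × ℝ → ℂ) {s t : Set ℝ}
    (hf : IntegrableOn f (s ×ˢ t)) :
    ∫ p in s ×ˢ t, f p = ∫ y in t, ∫ x in s, f (x, y) := by
  rw [Measure.volume_eq_prod] at hf
  rw [IntegrableOn, ← Measure.prod_restrict] at hf
  have h := MeasureTheory.integral_prod_symm f hf
  rw [Measure.prod_restrict, ← Measure.volume_eq_prod] at h
  exact h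

lemma setIntegral_prod' (f : ℝ × ℝ → ℂ) {s t : Set ℝ}
    (hf : IntegrableOn f (s ×ˢ t)) :
    ∫ p in s ×ˢ t, f p = ∫ x in s, ∫ y in t, f (x, y) := by
  rw [Measure.volume_eq_prod] at hf
  rw [IntegrableOn, ← Measure.prod_restrict] at hf
  have h := MeasureTheory.integral_prod f hf
  rw [Measure.prod_restrict, ← Measure.volume_eq_prod] at h
  exact h

-- derivative helpers
lemma hasDerivAt_eC (θ : ℝ) : HasDerivAt eC (Complex.I * eC θ) θ := by
  have h1 : HasDerivAt (fun θ : ℝ => (θ : ℂ) * Complex.I) Complex.I θ := by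
    simpa using ((hasDerivAt_id θ).ofReal_comp).mul_const Complex.I
  have h2 := h1.cexp
  rw [show Complex.I * eC θ = Complex.exp ((θ:ℂ) * Complex.I) * Complex.I from by
    rw [eC]; ring]
  exact h2

lemma hasDerivAt_r (c z : ℂ) (r : ℝ) :
    HasDerivAt (fun r : ℝ => z - (r : ℂ) * c) (-c) r := by
  simpa using (((hasDerivAt_id r).ofReal_comp).mul_const c).const_sub z

lemma key (g : ℂ → ℂ) (hg : ContDiff ℝ (⊤:ℕ∞) g) (hcg : HasCompactSupport g) (z : ℂ) :
    ∫ t : ℂ, ((Real.pi : ℂ) * t)⁻¹ * wirtingerBar g (z - t) = g z := by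
  set L : ℂ → ℂ →L[ℝ] ℂ := fderiv ℝ g with hL
  have hdiff : Differentiable ℝ g := hg.differentiable (by simp)
  have hLcont : Continuous L := (hg.fderiv_right (m := (⊤:ℕ∞)) (by exact_mod_cast le_top)).continuous
  obtain ⟨M, hM⟩ := hcg.isBounded.subset_closedBall 0
  set R : ℝ := ‖z‖ + |M| + 1 with hR
  have hR0 : 0 < R := by positivity
  have hvan : ∀ r : ℝ, R ≤ r → ∀ θ : ℝ, z - (r : ℂ) * eC θ ∉ tsupport g := by
    intro r hr θ hmem
    have h1 : ‖z - (r : ℂ) * eC θ‖ ≤ |M| := by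
      have := hM hmem
      simp only [mem_closedBall, dist_zero_right] at this
      exact this.trans (le_abs_self M)
    have h2 : r - ‖z‖ ≤ ‖z - (r : ℂ) * eC θ‖ := by
      have : ‖(r : ℂ) * eC θ‖ = |r| := by
        simp [map_mul, eC_abs]
      calc r - ‖z‖ ≤ |r| - ‖z‖ := by linarith [le_abs_self r]
        _ = ‖(r:ℂ) * eC θ‖ - ‖z‖ := by rw [this]
        _ ≤ ‖z - (r:ℂ) * eC θ‖ := by
            rw [norm_sub_rev]
            exact norm_sub_norm_le _ _
    have : r ≤ ‖z‖ + |M| := by linarith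
    linarith [hR ▸ hr]
  have hvanL : ∀ r : ℝ, R ≤ r → ∀ θ : ℝ, L (z - (r : ℂ) * eC θ) = 0 := by
    intro r hr θ
    by_contra hne
    exact hvan r hr θ (support_fderiv_subset ℝ (f := g) hne)
  set F₁ : ℝ × ℝ → ℂ := fun p => L (z - (p.1 : ℂ) * eC p.2) (eC p.2) with hF₁
  set F₂ : ℝ × ℝ → ℂ :=
    fun p => Complex.I * L (z - (p.1 : ℂ) * eC p.2) (Complex.I * eC p.2) with hF₂
  set T : Set (ℝ × ℝ) := Ioi (0:ℝ) ×ˢ Ioo (-Real.pi) Real.pi with hT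
  have hTm : MeasurableSet T := measurableSet_Ioi.prod measurableSet_Ioo
  have heCcont : Continuous (fun p : ℝ × ℝ => eC p.2) := by
    unfold eC; fun_prop
  have hucont : Continuous (fun p : ℝ × ℝ => z - (p.1 : ℂ) * eC p.2) := by
    apply continuous_const.sub
    exact (Complex.continuous_ofReal.comp continuous_fst).mul heCcont
  have hcF₁ : Continuous F₁ := ((hLcont.comp hucont).clm_apply heCcont)
  have hcF₂ : Continuous F₂ :=
    continuous_const.mul ((hLcont.comp hucont).clm_apply (continuous_const.mul heCcont))
  have hvan₁ : ∀ p : ℝ × ℝ, R ≤ p.1 → F₁ p = 0 := by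
    intro p hp; rw [hF₁]; simp [hvanL p.1 hp p.2]
  have hvan₂ : ∀ p : ℝ × ℝ, R ≤ p.1 → F₂ p = 0 := by
    intro p hp; rw [hF₂]; simp [hvanL p.1 hp p.2]
  have hinteg : ∀ F : ℝ × ℝ → ℂ, Continuous F → (∀ p : ℝ × ℝ, R ≤ p.1 → F p = 0) →
      IntegrableOn F T := by
    intro F hc hv
    have hsplit : T = (Ioc 0 R ×ˢ Ioo (-Real.pi) Real.pi) ∪
        (Ioi R ×ˢ Ioo (-Real.pi) Real.pi) := by
      rw [hT, ← Set.union_prod, Set.Ioc_union_Ioi_eq_Ioi hR0.le]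
    rw [hsplit]
    apply IntegrableOn.union
    · exact (hc.continuousOn.integrableOn_compact
        ((isCompact_Icc (a := (0:ℝ)) (b := R)).prod
          (isCompact_Icc (a := -Real.pi) (b := Real.pi)))).mono_set
        (Set.prod_mono Set.Ioc_subset_Icc_self Set.Ioo_subset_Icc_self)
    · exact integrableOn_zero.congr_fun
        (fun p hp => (hv p (le_of_lt hp.1)).symm) (measurableSet_Ioi.prod measurableSet_Ioo)
  have hint₁ := hinteg F₁ hcF₁ hvan₁
  have hint₂ := hinteg F₂ hcF₂ hvan₂
  -- polar coordinates
  have hpolar := (Complex.integral_comp_polarCoord_symm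
    (fun t => ((Real.pi : ℂ) * t)⁻¹ * wirtingerBar g (z - t))).symm
  rw [hpolar, polarCoord_target]
  have hcongr : ∫ p in Ioi (0:ℝ) ×ˢ Ioo (-Real.pi) Real.pi,
      p.1 • (((Real.pi : ℂ) * Complex.polarCoord.symm p)⁻¹ *
        wirtingerBar g (z - Complex.polarCoord.symm p))
      = ∫ p in T, ((2 * Real.pi)⁻¹ : ℝ) • (F₁ p + F₂ p) := by
    apply setIntegral_congr_fun hTm
    rintro ⟨r, θ⟩ ⟨hr, hθ⟩
    have hr0 : (0:ℝ) < r := hr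
    dsimp only
    have hsymm : Complex.polarCoord.symm (r, θ) = (r : ℂ) * eC θ := by
      rw [Complex.polarCoord_symm_apply, eC_eq]
    rw [hsymm]
    rw [wirtingerBar]
    rw [show (fderiv ℝ g (z - ↑r * eC θ)) = L (z - ↑r * eC θ) from rfl]
    rw [hF₁, hF₂]
    simp only
    rw [rot (L (z - ↑r * eC θ)) θ]
    rw [Complex.real_smul, Complex.real_smul]
    have h1 : ((Real.pi : ℂ) * ((r:ℂ) * eC θ))⁻¹ =
        (Real.pi : ℂ)⁻¹ * ((r:ℂ))⁻¹ * (eC θ)⁻¹ := by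
      rw [mul_inv, mul_inv]; ring
    rw [h1]
    have hrne : ((r:ℂ)) ≠ 0 := by exact_mod_cast hr0.ne'
    have hpine : ((Real.pi : ℂ)) ≠ 0 := by exact_mod_cast Real.pi_ne_zero
    push_cast
    field_simp [eC_ne θ]
  rw [hcongr]
  rw [integral_smul]
  rw [integral_add hint₁ hint₂]
  -- F₂ integrates to zero
  have hF₂zero : ∫ p in T, F₂ p = 0 := by
    rw [hT, setIntegral_prod' _ hint₂]
    rw [show ∫ r in Ioi (0:ℝ), ∫ θ in Ioo (-Real.pi) Real.pi, F₂ (r, θ)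
        = ∫ r in Ioi (0:ℝ), (0:ℂ) from ?_, integral_zero]
    apply setIntegral_congr_fun measurableSet_Ioi
    intro r hr
    dsimp only
    have hr0 : (0:ℝ) < r := hr
    have hrne : ((r:ℂ)) ≠ 0 := by exact_mod_cast hr0.ne'
    set Φ : ℝ → ℂ := fun θ => (-(Complex.I) / (r:ℂ)) * g (z - (r:ℂ) * eC θ) with hΦ
    have hderiv : ∀ θ : ℝ, HasDerivAt Φ (F₂ (r, θ)) θ := by
      intro θ
      have h1 : HasDerivAt (fun θ : ℝ => z - (r:ℂ) * eC θ)
          (-((r:ℂ) * (Complex.I * eC θ))) θ := by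
        simpa using (((hasDerivAt_eC θ).const_mul ((r:ℂ))).const_sub z)
      have h2 := ((hdiff _).hasFDerivAt.comp_hasDerivAt θ h1)
      have h3 := h2.const_mul (-(Complex.I) / (r:ℂ))
      convert h3 using 1
      · rfl
      · rfl
      have h4 : L (z - (r:ℂ)*eC θ) (-((r:ℂ) * (Complex.I * eC θ)))
          = -(r:ℂ) * L (z - (r:ℂ)*eC θ) (Complex.I * eC θ) := by
        have : (-((r:ℂ) * (Complex.I * eC θ))) = ((-r : ℝ)) • (Complex.I * eC θ) := by
          rw [Complex.real_smul]; push_cast; ring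
        rw [this, (L _).map_smul, Complex.real_smul]; push_cast; ring
      rw [hF₂]; simp only [← hL, h4]
      field_simp
    have hii : IntervalIntegrable (fun θ => F₂ (r, θ)) volume (-Real.pi) Real.pi :=
      (hcF₂.comp (continuous_const.prodMk continuous_id)).intervalIntegrable _ _
    rw [← MeasureTheory.integral_Ioc_eq_integral_Ioo,
      ← intervalIntegral.integral_of_le (by linarith [Real.pi_pos])]
    rw [intervalIntegral.integral_eq_sub_of_hasDerivAt (fun θ _ => hderiv θ) hii]
    have : eC Real.pi = eC (-Real.pi) := by
      rw [eC_eq, eC_eq]; simp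
    rw [hΦ]; simp only [this, sub_self]
  rw [hF₂zero, add_zero]
  -- F₁ integrates to (2π) g z
  have hF₁val : ∫ p in T, F₁ p = (2 * Real.pi : ℝ) • g z := by
    rw [hT, setIntegral_prod_symm' _ hint₁]
    have hinner : ∀ θ : ℝ, ∫ r in Ioi (0:ℝ), F₁ (r, θ) = g z := by
      intro θ
      have hsplit : Ioi (0:ℝ) = Ioc 0 R ∪ Ioi R := (Set.Ioc_union_Ioi_eq_Ioi hR0.le).symm
      have hi1 : IntegrableOn (fun r => F₁ (r, θ)) (Ioc 0 R) := by
        apply ((hcF₁.comp (continuous_id.prodMk continuous_const)).continuousOn.integrableOn_compact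
          isCompact_Icc).mono_set Set.Ioc_subset_Icc_self
      have hi2 : IntegrableOn (fun r => F₁ (r, θ)) (Ioi R) :=
        integrableOn_zero.congr_fun
          (fun r hr => (hvan₁ (r, θ) (le_of_lt hr)).symm) measurableSet_Ioi
      rw [hsplit, MeasureTheory.setIntegral_union (Set.Ioc_disjoint_Ioi le_rfl)
        measurableSet_Ioi hi1 hi2]
      have hzero : ∫ r in Ioi R, F₁ (r, θ) = 0 := by
        rw [show ∫ r in Ioi R, F₁ (r, θ) = ∫ _ in Ioi R, (0:ℂ) from
          setIntegral_congr_fun measurableSet_Ioi (fun r hr => hvan₁ (r, θ) (le_of_lt hr)),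
          integral_zero]
      rw [hzero, add_zero]
      have hderiv : ∀ x : ℝ, HasDerivAt (fun r : ℝ => -g (z - (r:ℂ) * eC θ)) (F₁ (x, θ)) x := by
        intro x
        have h1 := hasDerivAt_r (eC θ) z x
        have h2 := ((hdiff _).hasFDerivAt.comp_hasDerivAt x h1)
        have h3 := h2.neg
        convert h3 using 1
        · rfl
        · rfl
        rw [hF₁]; simp only [map_neg, neg_neg]; rfl
      have hii : IntervalIntegrable (fun r => F₁ (r, θ)) volume 0 R :=
        (hcF₁.comp (continuous_id.prodMk continuous_const)).intervalIntegrable _ _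
      rw [← intervalIntegral.integral_of_le hR0.le,
        intervalIntegral.integral_eq_sub_of_hasDerivAt (fun x _ => hderiv x) hii]
      have hgR : g (z - (R:ℂ) * eC θ) = 0 :=
        image_eq_zero_of_notMem_tsupport (hvan R le_rfl θ)
      simp [hgR]
    rw [show ∫ θ in Ioo (-Real.pi) Real.pi, ∫ r in Ioi (0:ℝ), F₁ (r, θ)
        = ∫ _ in Ioo (-Real.pi) Real.pi, g z from
      setIntegral_congr_fun measurableSet_Ioo (fun θ _ => hinner θ)]
    rw [setIntegral_const]
    congr 1
    rw [measureReal_def, Real.volume_Ioo, ENNReal.toReal_ofReal (by linarith [Real.pi_pos])]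
    ring
  rw [hF₁val, smul_smul]
  rw [inv_mul_cancel₀ (by positivity : (2 * Real.pi : ℝ) ≠ 0), one_smul]





lemma locInt' : LocallyIntegrable (fun t : ℂ => ((Real.pi : ℂ) * t)⁻¹) volume := by
  have h : (fun t : ℂ => ((Real.pi : ℂ) * t)⁻¹)
      = fun t : ℂ => ((Real.pi : ℂ))⁻¹ • t⁻¹ := by
    funext t; rw [mul_inv, smul_eq_mul]
  rw [h]
  exact locInt.smul ((Real.pi : ℂ))⁻¹

lemma conv_solution (g : ℂ → ℂ) (hg : ContDiff ℝ (⊤:ℕ∞) g) (hcg : HasCompactSupport g) :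
    ∃ ζ : ℂ → ℂ, ∀ z : ℂ, DifferentiableAt ℝ ζ z ∧ wirtingerBar ζ z = g z := by
  classical
  set f : ℂ → ℂ := fun t => ((Real.pi : ℂ) * t)⁻¹ with hf
  set Lm : ℂ →L[ℝ] ℂ →L[ℝ] ℂ := ContinuousLinearMap.mul ℝ ℂ with hLm
  set ζ : ℂ → ℂ := f ⋆[Lm] g with hζ
  have hg1 : ContDiff ℝ 1 g := hg.of_le (by exact_mod_cast le_top)
  have hD : ∀ z : ℂ, HasFDerivAt ζ ((f ⋆[Lm.precompR ℂ] fderiv ℝ g) z) z := fun z =>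
    hcg.hasFDerivAt_convolution_right Lm locInt' hg1 z
  refine ⟨ζ, fun z => ⟨(hD z).differentiableAt, ?_⟩⟩
  have hfd : fderiv ℝ ζ z = (f ⋆[Lm.precompR ℂ] fderiv ℝ g) z := (hD z).fderiv
  have happly : ∀ v : ℂ, (f ⋆[Lm.precompR ℂ] fderiv ℝ g) z v
      = ∫ t : ℂ, f t * (fderiv ℝ g (z - t) v) := by
    intro v
    rw [convolution_precompR_apply Lm locInt' (hcg.fderiv ℝ)
      (hg1.continuous_fderiv one_ne_zero) z v]
    rfl
  have hce : ∀ v : ℂ, Integrable (fun t : ℂ => f t * (fderiv ℝ g (z - t) v)) := by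
    intro v
    have hsupp : HasCompactSupport (fun a : ℂ => fderiv ℝ g a v) := by
      apply (hcg.fderiv ℝ).mono
      intro a ha
      simp only [Function.mem_support] at ha ⊢
      intro hzero
      exact ha (by rw [hzero]; rfl)
    have := hsupp.convolutionExists_right Lm locInt'
      ((hg1.continuous_fderiv one_ne_zero).clm_apply continuous_const) z
    exact this
  rw [wirtingerBar, hfd, happly 1, happly Complex.I]
  rw [← MeasureTheory.integral_const_mul Complex.I,
    ← integral_add (hce 1) ((hce Complex.I).const_mul Complex.I),
    ← MeasureTheory.integral_const_mul (1/2 : ℂ)]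
  rw [← key g hg hcg z]
  apply integral_congr_ae
  apply Filter.Eventually.of_forall
  intro t
  simp only [wirtingerBar]
  ring




/-- Local solvability of the inhomogeneous Cauchy–Riemann equation: if `h` is smooth on an
open set `U ⊆ ℂ` and `z₀ ∈ U`, then there are `r > 0` with `B(z₀, r) ⊆ U` and a function
`ζ` real-differentiable on `B(z₀, r)` with `∂ζ/∂z̄ = h` there. -/
theorem local_solvability_dbar (U : Set ℂ) (hU : IsOpen U)
    (h : ℂ → ℂ) (hh : ContDiffOn ℝ (⊤ : ℕ∞) h U) (z₀ : ℂ) (hz₀ : z₀ ∈ U) :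
    ∃ r > 0, Metric.ball z₀ r ⊆ U ∧
      ∃ ζ : ℂ → ℂ, ∀ z ∈ Metric.ball z₀ r,
        DifferentiableAt ℝ ζ z ∧ wirtingerBar ζ z = h z := by
  obtain ⟨δ, hδ0, hδU⟩ := Metric.isOpen_iff.mp hU z₀ hz₀
  set ε : ℝ := δ / 2 with hε
  have hε0 : 0 < ε := by positivity
  have hεU : closedBall z₀ ε ⊆ U := by
    refine Subset.trans ?_ hδU
    intro x hx
    rw [mem_closedBall] at hx
    rw [mem_ball]
    linarith
  set φ : ContDiffBump z₀ := ⟨ε / 2, ε, by positivity, by linarith⟩ with hφ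
  set g : ℂ → ℂ := fun w => φ w • h w with hg
  have hh' : ContDiffOn ℝ (⊤:ℕ∞) h U := hh.of_le (by simp)
  have hgsmooth : ContDiff ℝ (⊤:ℕ∞) g := by
    rw [contDiff_iff_contDiffAt]
    intro x
    by_cases hx : x ∈ U
    · exact (φ.contDiff.contDiffAt).smul ((hh' x hx).contDiffAt (hU.mem_nhds hx))
    · have hxn : x ∉ tsupport (φ : ℂ → ℝ) := by
        rw [φ.tsupport_eq]
        intro hmem
        exact hx (hεU hmem)
      have hev : g =ᶠ[nhds x] (fun _ => (0:ℂ)) := by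
        have := (isClosed_tsupport (φ : ℂ → ℝ)).isOpen_compl.eventually_mem hxn
        filter_upwards [this] with y hy
        replace hy : y ∉ tsupport (φ : ℂ → ℝ) := hy
        rw [hg]
        simp [image_eq_zero_of_notMem_tsupport hy]
      exact (contDiffAt_const (c := (0:ℂ))).congr_of_eventuallyEq hev
  have hgsupp : HasCompactSupport g := by
    apply φ.hasCompactSupport.mono
    intro w hw
    simp only [Function.mem_support, hg] at hw ⊢
    intro h0
    exact hw (by rw [h0]; simp)
  obtain ⟨ζ, hζ⟩ := conv_solution g hgsmooth hgsupp
  refine ⟨ε / 2, by positivity, ?_, ζ, ?_⟩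
  · intro x hx
    apply hεU
    rw [mem_ball] at hx
    rw [mem_closedBall]
    linarith
  · intro z hz
    refine ⟨(hζ z).1, ?_⟩
    rw [(hζ z).2, hg]
    have : φ z = 1 := φ.one_of_mem_closedBall (by
      rw [mem_ball] at hz
      rw [mem_closedBall]
      exact hz.le)
    simp [this]
end
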